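/- Let w̃_1, w̃_2, ṽ_1, ṽ_2 ∈ W(1) and s̃_1, s̃_2 ∈ S^aff(1), and suppose w̃_1 s̃_1 ṽ_1 = w̃_2 s̃_2 ṽ_2 and π(w̃_1 ṽ_1) = π(w̃_2 ṽ_2). Then w̃_1 c_{s̃_1} ṽ_1 = w̃_2 c_{s̃_2} ṽ_2 in the group algebra R[W(1)]. -/

import Mathlib

open scoped Classical

/-!
With `w = w̃₂⁻¹ w̃₁`, the two hypotheses say that `s̃₂ = (w s̃₁ w⁻¹) t` for some `t ∈ Z`; the
conjugation and translation rules for `c` then turn `w̃₂ c_{s̃₂} ṽ₂` into `w̃₁ c_{s̃₁} ṽ₁`.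
-/

theorem MonoidHom.exists_eq_conj_mul_of_mul_mul_eq {G H : Type*} [Group G] [Group H]
    (f : G →* H) {w₁ w₂ v₁ v₂ s₁ s₂ : G} (heq : w₁ * s₁ * v₁ = w₂ * s₂ * v₂)
    (hf : f (w₁ * v₁) = f (w₂ * v₂)) :
    ∃ w t, t ∈ f.ker ∧ w₁ = w₂ * w ∧ v₁ = w⁻¹ * t * v₂ ∧ s₂ = w * s₁ * w⁻¹ * t := by
  refine ⟨w₂⁻¹ * w₁, w₂⁻¹ * w₁ * v₁ * v₂⁻¹, ?_, by group, by group, ?_⟩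
  · rw [f.mem_ker, show w₂⁻¹ * w₁ * v₁ * v₂⁻¹ = w₂⁻¹ * (w₁ * v₁) * v₂⁻¹ by group,
      map_mul, map_mul, hf, ← map_mul, ← map_mul]
    simp
  · calc s₂ = w₂⁻¹ * (w₂ * s₂ * v₂) * v₂⁻¹ := by group
      _ = _ := by rw [← heq]; group

theorem stmt_13_general
    {R : Type} [CommRing R]
    {W : Type} [Group W] {W1 : Type} [Group W1]
    (pr : W1 →* W)
    (Saff : Set W)
    (c : W1 → MonoidAlgebra R W1)
    (hct : ∀ st t : W1, pr st ∈ Saff → t ∈ pr.ker →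
      c (st * t) = c st * MonoidAlgebra.single t 1)
    (hcconj : ∀ wt st : W1, pr st ∈ Saff → pr (wt * st * wt⁻¹) ∈ Saff →
      c (wt * st * wt⁻¹)
        = MonoidAlgebra.single wt (1 : R) * c st * MonoidAlgebra.single wt⁻¹ 1)
    (wt1 wt2 vt1 vt2 st1 st2 : W1)
    (hs1 : pr st1 ∈ Saff) (hs2 : pr st2 ∈ Saff)
    (heq : wt1 * st1 * vt1 = wt2 * st2 * vt2)
    (hpi : pr (wt1 * vt1) = pr (wt2 * vt2)) :
    MonoidAlgebra.single wt1 (1 : R) * c st1 * MonoidAlgebra.single vt1 1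
      = MonoidAlgebra.single wt2 (1 : R) * c st2 * MonoidAlgebra.single vt2 1 := by
  obtain ⟨w, t, ht, rfl, rfl, rfl⟩ := pr.exists_eq_conj_mul_of_mul_mul_eq heq hpi
  have hconj : pr (w * st1 * w⁻¹) ∈ Saff := by
    rwa [map_mul pr _ t, pr.mem_ker.mp ht, mul_one] at hs2
  rw [hct _ _ hconj ht, hcconj _ _ hs1 hconj]
  simp only [← MonoidAlgebra.of_apply, map_mul, mul_assoc]

theorem stmt_13
    {R : Type} [CommRing R]
    {W : Type} [Group W] {W1 : Type} [Group W1]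
    (pr : W1 →* W) (hpr : Function.Surjective pr)
    (hker_comm : ∀ t t' : W1, t ∈ pr.ker → t' ∈ pr.ker → t * t' = t' * t)
    (len : W → ℕ) (Saff : Set W) (Om : Subgroup W)
    (hSaff_sq : ∀ s ∈ Saff, s * s = 1)
    (hSaff_len : ∀ s ∈ Saff, len s = 1)
    (hOm : ∀ w : W, w ∈ Om ↔ len w = 0)
    (hOmconj : ∀ τ ∈ Om, ∀ s ∈ Saff, τ * s * τ⁻¹ ∈ Saff)
    (hred : ∀ w : W, ∃ (l : List W) (τ : W), (∀ s ∈ l, s ∈ Saff) ∧ τ ∈ Om ∧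
      w = l.prod * τ ∧ l.length = len w)
    (c : W1 → MonoidAlgebra R W1)
    (hcsupp : ∀ st : W1, pr st ∈ Saff → ∀ t ∈ (c st).coeff.support, t ∈ pr.ker)
    (hct : ∀ st t : W1, pr st ∈ Saff → t ∈ pr.ker →
      c (st * t) = c st * MonoidAlgebra.single t 1)
    (hcconj : ∀ wt st : W1, pr st ∈ Saff → pr (wt * st * wt⁻¹) ∈ Saff →
      c (wt * st * wt⁻¹)
        = MonoidAlgebra.single wt (1 : R) * c st * MonoidAlgebra.single wt⁻¹ 1)
    (wt1 wt2 vt1 vt2 st1 st2 : W1)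
    (hs1 : pr st1 ∈ Saff) (hs2 : pr st2 ∈ Saff)
    (heq : wt1 * st1 * vt1 = wt2 * st2 * vt2)
    (hpi : pr (wt1 * vt1) = pr (wt2 * vt2)) :
    MonoidAlgebra.single wt1 (1 : R) * c st1 * MonoidAlgebra.single vt1 1
      = MonoidAlgebra.single wt2 (1 : R) * c st2 * MonoidAlgebra.single vt2 1 :=
  stmt_13_general pr Saff c hct hcconj wt1 wt2 vt1 vt2 st1 st2 hs1 hs2 heq hpi
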